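/- Let Σ be the ranked alphabet with unary symbols f, g and constant ♯, and let R over Σ consist of the rules f(g(x₁)) → f(f(g(g(x₁)))), f(♯) → ♯, g(♯) → ♯, ♯ → f(♯), and ♯ → g(♯). Then: (a) for every t ∈ T_Σ one has t →*_R ♯ and ♯ →*_R t, so for every nonempty L ⊆ T_Σ, R*_Σ(L) = T_Σ (in particular R preserves Σ-recognizability of finite tree languages); but (b) for the extended alphabet Δ = Σ ∪ {h} with h a fresh unary symbol, R*_Δ({f(g(h(♯)))}) = {fⁿ(gⁿ(h(t))) : n ≥ 1, t ∈ T_Σ}, which is not a recognizable tree language over Δ; hence R does not preserve recognizability of finite tree languages. -/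

import Mathlib

set_option autoImplicit false

/-!
Basic framework: ranked alphabets, terms, term rewrite systems,
bottom-up tree automata, recognizability.
A ranked alphabet is modelled by a (finite) type `σ` together with an
arity function `ar : σ → ℕ`.  `Tm.var n` denotes the variable `x_{n+1}`,
so `T_Σ(X_m)` corresponds to terms all of whose variables satisfy `n < m`,
and ground terms (`T_Σ`) are terms satisfying `Tm.Ground`.
-/

/-- Terms over the ranked alphabet `(σ, ar)` with variables `x₁, x₂, …`
(`var n` is `x_{n+1}`). -/
inductive Tm (σ : Type) (ar : σ → ℕ) : Type
  | var : ℕ → Tm σ ar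
  | app : (f : σ) → (Fin (ar f) → Tm σ ar) → Tm σ ar

namespace Tm

variable {σ γ : Type} {ar : σ → ℕ} {arγ : γ → ℕ}

/-- Application of a substitution `θ` (assigning a term to each variable). -/
def subst (θ : ℕ → Tm σ ar) : Tm σ ar → Tm σ ar
  | var n => θ n
  | app f ts => app f fun i => (ts i).subst θ

/-- A term is ground if it contains no variables. -/
def Ground : Tm σ ar → Prop
  | var _ => False
  | app _ ts => ∀ i, (ts i).Ground

/-- The set of (indices of) variables occurring in a term. -/
def vars : Tm σ ar → Set ℕ
  | var n => {n}
  | app _ ts => ⋃ i, (ts i).vars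

/-- Number of occurrences of the variable `x_{n+1}` in a term. -/
def count (n : ℕ) : Tm σ ar → ℕ
  | var m => if m = n then 1 else 0
  | app _ ts => ∑ i, (ts i).count n

/-- A term is linear if every variable occurs at most once in it. -/
def Linear (t : Tm σ ar) : Prop := ∀ n, t.count n ≤ 1

/-- The symbol `s` occurs in the term. -/
def symOccurs (s : σ) : Tm σ ar → Prop
  | var _ => False
  | app f ts => f = s ∨ ∃ i, (ts i).symOccurs s

/-- Height of a term (constants and variables have height 0). -/
def height : Tm σ ar → ℕ
  | var _ => 0
  | app _ ts => Finset.univ.sup fun i => (ts i).height + 1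

/-- Renaming of the alphabet along an arity-preserving map. -/
def map (ι : σ → γ) (h : ∀ s, arγ (ι s) = ar s) : Tm σ ar → Tm γ arγ
  | var n => var n
  | app f ts => app (ι f) fun i => (ts (Fin.cast (h f) i)).map ι h

/-- The subterm of `t` at a position (a list of argument indices), if defined. -/
def subAt : Tm σ ar → List ℕ → Option (Tm σ ar)
  | t, [] => some t
  | var _, _ :: _ => none
  | app f ts, i :: p => if h : i < ar f then (ts ⟨i, h⟩).subAt p else none

/-- Subterm relation. -/
inductive Subtm : Tm σ ar → Tm σ ar → Prop
  | refl (t : Tm σ ar) : Subtm t t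
  | app {s : Tm σ ar} {f : σ} {ts : Fin (ar f) → Tm σ ar} (i : Fin (ar f)) :
      Subtm s (ts i) → Subtm s (Tm.app f ts)

end Tm

section Rewriting

variable {σ γ : Type} {ar : σ → ℕ} {arγ : γ → ℕ}

/-- One-step rewriting by the rule set `R`: apply a rule under a substitution
at the root, or rewrite inside one argument. -/
inductive Step (R : Set (Tm σ ar × Tm σ ar)) : Tm σ ar → Tm σ ar → Prop
  | rule {l r : Tm σ ar} (θ : ℕ → Tm σ ar) (h : (l, r) ∈ R) :
      Step R (l.subst θ) (r.subst θ)
  | congr {f : σ} {ts : Fin (ar f) → Tm σ ar} {t' : Tm σ ar} (i : Fin (ar f)) :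
      Step R (ts i) t' → Step R (Tm.app f ts) (Tm.app f (Function.update ts i t'))

/-- Many-step rewriting: reflexive-transitive closure of `Step`. -/
def Steps (R : Set (Tm σ ar × Tm σ ar)) : Tm σ ar → Tm σ ar → Prop :=
  Relation.ReflTransGen (Step R)

/-- `R` is a term rewrite system: finitely many rules, and every variable of a
right-hand side occurs in the corresponding left-hand side. -/
def IsTRS (R : Set (Tm σ ar × Tm σ ar)) : Prop :=
  R.Finite ∧ ∀ lr ∈ R, lr.2.vars ⊆ lr.1.vars

/-- The set `R*(L)` of descendants of members of `L`. -/
def Desc (R : Set (Tm σ ar × Tm σ ar)) (L : Set (Tm σ ar)) : Set (Tm σ ar) :=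
  {p | ∃ q ∈ L, Steps R q p}

/-- `R` is terminating: there is no infinite reduction sequence. -/
def Terminating (R : Set (Tm σ ar × Tm σ ar)) : Prop :=
  ¬ ∃ f : ℕ → Tm σ ar, ∀ n, Step R (f n) (f (n + 1))

/-- `R` is confluent. -/
def Confluent (R : Set (Tm σ ar × Tm σ ar)) : Prop :=
  ∀ a b c, Steps R a b → Steps R a c → ∃ d, Steps R b d ∧ Steps R c d

/-- `u` is an `R`-normal form of `t`. -/
def NormalFormOf (R : Set (Tm σ ar × Tm σ ar)) (t u : Tm σ ar) : Prop :=
  Steps R t u ∧ ¬ ∃ v, Step R u v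

/-- The term is a variable. -/
def IsVarTm (t : Tm σ ar) : Prop := ∃ n, t = Tm.var n

/-- Every left-hand side is linear. -/
def LeftLinearTRS (R : Set (Tm σ ar × Tm σ ar)) : Prop :=
  ∀ lr ∈ R, lr.1.Linear

/-- All left- and right-hand sides are linear. -/
def LinearTRS (R : Set (Tm σ ar × Tm σ ar)) : Prop :=
  ∀ lr ∈ R, lr.1.Linear ∧ lr.2.Linear

/-- No rule has a variable as left-hand side or as right-hand side. -/
def CollapseFree (R : Set (Tm σ ar × Tm σ ar)) : Prop :=
  ∀ lr ∈ R, ¬ IsVarTm lr.1 ∧ ¬ IsVarTm lr.2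

/-- Transport of a rule set along an arity-preserving renaming of the alphabet. -/
def mapRules (ι : σ → γ) (h : ∀ s, arγ (ι s) = ar s) (R : Set (Tm σ ar × Tm σ ar)) :
    Set (Tm γ arγ × Tm γ arγ) :=
  (fun lr => (lr.1.map ι h, lr.2.map ι h)) '' R

end Rewriting

/-- A bottom-up tree automaton over `(σ, ar)` with state type `Q`:
transition rules `δ(q₁,…,qₙ) → q`, λ-rules `q → q'`, and final states. -/
structure BTA (σ : Type) (ar : σ → ℕ) (Q : Type) where
  trans : ∀ f : σ, (Fin (ar f) → Q) → Q → Prop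
  eps : Q → Q → Prop
  final : Q → Prop

namespace BTA

variable {σ : Type} {ar : σ → ℕ} {Q : Type}

/-- `t →* q`: the (ground) term `t` can be rewritten to the state `q`. -/
inductive Reach (A : BTA σ ar Q) : Tm σ ar → Q → Prop
  | app {f : σ} {ts : Fin (ar f) → Tm σ ar} {qs : Fin (ar f) → Q} {q : Q} :
      (∀ i, Reach A (ts i) (qs i)) → A.trans f qs q → Reach A (Tm.app f ts) q
  | eps {t : Tm σ ar} {q q' : Q} : Reach A t q → A.eps q q' → Reach A t q'

/-- The tree language recognized by the automaton. -/
def Lang (A : BTA σ ar Q) : Set (Tm σ ar) := {t | ∃ q, A.final q ∧ A.Reach t q}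

end BTA

/-- A tree language is recognizable if some bottom-up tree automaton with a
finite state set recognizes it. -/
def Recognizable {σ : Type} {ar : σ → ℕ} (L : Set (Tm σ ar)) : Prop :=
  ∃ (Q : Type) (_ : Finite Q) (A : BTA σ ar Q), A.Lang = L

/-- `R` (a TRS over all of `σ`, thought of as `sign(R)`) preserves
recognizability of finite tree languages: for every ranked alphabet extending
`σ` (i.e. every finite type with an arity-preserving injection from `σ`) and
every finite tree language of ground terms, the descendant set is recognizable. -/
def PRF {σ : Type} {ar : σ → ℕ} (R : Set (Tm σ ar × Tm σ ar)) : Prop :=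
  ∀ (γ : Type) (arγ : γ → ℕ), Finite γ →
    ∀ ι : σ → γ, Function.Injective ι →
      ∀ h : ∀ s, arγ (ι s) = ar s,
        ∀ L : Set (Tm γ arγ), L.Finite → (∀ t ∈ L, t.Ground) →
          Recognizable (Desc (mapRules ι h R) L)

/-- `R` preserves recognizability: as `PRF`, but for arbitrary recognizable
tree languages. -/
def PR {σ : Type} {ar : σ → ℕ} (R : Set (Tm σ ar × Tm σ ar)) : Prop :=
  ∀ (γ : Type) (arγ : γ → ℕ), Finite γ →
    ∀ ι : σ → γ, Function.Injective ι →
      ∀ h : ∀ s, arγ (ι s) = ar s,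
        ∀ L : Set (Tm γ arγ), Recognizable L →
          Recognizable (Desc (mapRules ι h R) L)

/-! ### Statement 19: a linear TRS that preserves `Σ`-recognizability of
finite tree languages but, over the extended alphabet `Δ = Σ ∪ {h}`, does not
preserve recognizability of finite tree languages. -/

inductive Sg19 : Type
  | f | g | sharp
deriving DecidableEq

instance : Fintype Sg19 := ⟨{.f, .g, .sharp}, fun x => by cases x <;> simp⟩

def ar19 : Sg19 → ℕ
  | .f => 1
  | .g => 1
  | .sharp => 0

def sharp19 : Tm Sg19 ar19 := .app .sharp ![]
def f19 (t : Tm Sg19 ar19) : Tm Sg19 ar19 := .app .f ![t]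
def g19 (t : Tm Sg19 ar19) : Tm Sg19 ar19 := .app .g ![t]

/-- `R = { f(g(x₁)) → f(f(g(g(x₁)))), f(♯) → ♯, g(♯) → ♯, ♯ → f(♯), ♯ → g(♯) }` -/
def R19 : Set (Tm Sg19 ar19 × Tm Sg19 ar19) :=
  {(f19 (g19 (.var 0)), f19 (f19 (g19 (g19 (.var 0))))),
   (f19 sharp19, sharp19),
   (g19 sharp19, sharp19),
   (sharp19, f19 sharp19),
   (sharp19, g19 sharp19)}

/-- `Δ = Σ ∪ {h}` with a fresh unary symbol `h`. -/
def arD19 : Sg19 ⊕ Unit → ℕ := Sum.elim ar19 fun _ => 1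

/-- embedding `T_Σ → T_Δ` -/
def embD19 : Tm Sg19 ar19 → Tm (Sg19 ⊕ Unit) arD19 :=
  Tm.map Sum.inl fun _ => rfl

def fD19 (t : Tm (Sg19 ⊕ Unit) arD19) : Tm (Sg19 ⊕ Unit) arD19 :=
  .app (Sum.inl .f) ![t]
def gD19 (t : Tm (Sg19 ⊕ Unit) arD19) : Tm (Sg19 ⊕ Unit) arD19 :=
  .app (Sum.inl .g) ![t]
def hD19 (t : Tm (Sg19 ⊕ Unit) arD19) : Tm (Sg19 ⊕ Unit) arD19 :=
  .app (Sum.inr ()) ![t]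

/-- `R` viewed as a TRS over `Δ`. -/
def R19D : Set (Tm (Sg19 ⊕ Unit) arD19 × Tm (Sg19 ⊕ Unit) arD19) :=
  mapRules Sum.inl (fun _ => rfl) R19

/-!
In `T_Σ` the rules `f(♯) → ♯` and `g(♯) → ♯` collapse every ground term to `♯`, and
`♯ → f(♯)`, `♯ → g(♯)` rebuild every ground term from `♯`; so from any ground term every ground
term is reachable, and the descendants of a nonempty set of ground terms form the recognizable set
`T_Σ`.

Over `Δ`, in a term `fᵏ(gⁿ(h(t)))` with `t ∈ T_Σ` no rule applies at or above `h` except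
`f(g(x)) → f(f(g(g(x))))` at the innermost `f`, which raises both exponents by one, while rewriting
inside `t` stays in `T_Σ`. Hence the descendants of `f(g(h(♯)))` are exactly the terms
`fⁿ(gⁿ(h(t)))`. A finite automaton has only finitely many sets of states, so two towers
`gⁿ⁺¹(h(♯))` and `gᵐ⁺¹(h(♯))` with `n ≠ m` reach the same states; then accepting
`fᵐ⁺¹(gᵐ⁺¹(h(♯)))` forces accepting `fᵐ⁺¹(gⁿ⁺¹(h(♯)))`.
-/

namespace Tm

variable {σ γ : Type} {ar : σ → ℕ} {arγ : γ → ℕ}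

@[simp]
theorem subst_var (t : Tm σ ar) : t.subst var = t := by
  induction t with
  | var n => rfl
  | app f ts ih => simp only [subst, ih]

theorem ground_subst_iff {θ : ℕ → Tm σ ar} {t : Tm σ ar} :
    (t.subst θ).Ground ↔ ∀ n ∈ t.vars, (θ n).Ground := by
  induction t with
  | var n => simp [subst, vars]
  | app f ts ih =>
    simp only [subst, Ground, vars, Set.mem_iUnion, ih]
    aesop

theorem map_subst (ι : σ → γ) (h : ∀ s, arγ (ι s) = ar s) (θ : ℕ → Tm σ ar) (t : Tm σ ar) :
    (t.subst θ).map ι h = (t.map ι h).subst fun n => (θ n).map ι h := by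
  induction t with
  | var n => rfl
  | app f ts ih => simp only [subst, map, ih]

end Tm

section Rewriting

variable {σ γ : Type} {ar : σ → ℕ} {arγ : γ → ℕ} {R : Set (Tm σ ar × Tm σ ar)}

def RootStep (R : Set (Tm σ ar × Tm σ ar)) (u v : Tm σ ar) : Prop :=
  ∃ l r θ, (l, r) ∈ R ∧ u = l.subst θ ∧ v = r.subst θ

theorem Step.of_mem {l r : Tm σ ar} (h : (l, r) ∈ R) : Step R l r := by
  simpa using Step.rule Tm.var h

theorem Step.app_cases {s : σ} {ts : Fin (ar s) → Tm σ ar} {v : Tm σ ar}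
    (h : Step R (.app s ts) v) :
    RootStep R (.app s ts) v ∨ ∃ i t', Step R (ts i) t' ∧ v = .app s (Function.update ts i t') := by
  generalize hu : Tm.app s ts = u at h
  cases h with
  | rule θ hlr => exact .inl ⟨_, _, θ, hlr, rfl, rfl⟩
  | congr i h =>
    injection hu with hs hts
    subst hs hts
    exact .inr ⟨i, _, h, rfl⟩

theorem Step.unary {s : σ} (hs : ar s = 1) {t t' : Tm σ ar} (h : Step R t t') :
    Step R (.app s fun _ => t) (.app s fun _ => t') := by
  have : Subsingleton (Fin (ar s)) := hs ▸ inferInstance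
  have := Step.congr (f := s) (ts := fun _ => t) ⟨0, by omega⟩ h
  rwa [Function.update_eq_const_of_subsingleton] at this

theorem Step.unary_cases {s : σ} (hs : ar s = 1) {t v : Tm σ ar}
    (h : Step R (.app s fun _ => t) v) :
    RootStep R (.app s fun _ => t) v ∨ ∃ t', Step R t t' ∧ v = .app s fun _ => t' := by
  have : Subsingleton (Fin (ar s)) := hs ▸ inferInstance
  rcases h.app_cases with hroot | ⟨i, t', hstep, rfl⟩
  · exact .inl hroot
  · exact .inr ⟨t', hstep, by rw [Function.update_eq_const_of_subsingleton]; rfl⟩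

theorem Step.ground (hR : ∀ lr ∈ R, lr.2.vars ⊆ lr.1.vars) {t t' : Tm σ ar}
    (h : Step R t t') (ht : t.Ground) : t'.Ground := by
  induction h with
  | rule θ hlr =>
    rw [Tm.ground_subst_iff] at ht ⊢
    exact fun n hn => ht n (hR _ hlr hn)
  | congr i _ ih =>
    intro j
    rcases eq_or_ne j i with rfl | hj
    · simpa using ih (ht j)
    · simpa [hj] using ht j

theorem Step.map (ι : σ → γ) (hι : ∀ s, arγ (ι s) = ar s) {t t' : Tm σ ar} (h : Step R t t') :
    Step (mapRules ι hι R) (t.map ι hι) (t'.map ι hι) := by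
  induction h with
  | rule θ hlr =>
    rw [Tm.map_subst, Tm.map_subst]
    exact Step.rule _ ⟨_, hlr, rfl⟩
  | @congr f ts t' i _ ih =>
    have := Step.congr (f := ι f) (ts := fun j => (ts (Fin.cast (hι f) j)).map ι hι)
      (Fin.cast (hι f).symm i) (by simpa using ih)
    simp only [Tm.map]
    convert this using 2
    funext j
    rcases eq_or_ne (Fin.cast (hι f) j) i with rfl | hj
    · simp
    · rw [Function.update_of_ne hj, Function.update_of_ne (by rintro rfl; simp at hj)]

theorem Steps.preserves {P : Tm σ ar → Prop} (hP : ∀ u v, Step R u v → P u → P v)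
    {t t' : Tm σ ar} (h : Steps R t t') (ht : P t) : P t' := by
  induction h with
  | refl => exact ht
  | tail _ h ih => exact hP _ _ h ih

end Rewriting

theorem rel_iterate {α : Type} {r : α → α → Prop} {F : α → α} (hF : ∀ x y, r x y → r (F x) (F y))
    (k : ℕ) {x y : α} (h : r x y) : r (F^[k] x) (F^[k] y) := by
  induction k with
  | zero => exact h
  | succ k ih => simpa only [Function.iterate_succ_apply'] using hF _ _ ih

section Automata

variable {σ : Type} {ar : σ → ℕ}

theorem recognizable_empty : Recognizable (∅ : Set (Tm σ ar)) :=
  ⟨Unit, inferInstance, ⟨fun _ _ _ => True, fun _ _ => False, fun _ => False⟩, by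
    ext; simp [BTA.Lang]⟩

theorem recognizable_setOf_ground : Recognizable {t : Tm σ ar | t.Ground} := by
  refine ⟨Unit, inferInstance, ⟨fun _ _ _ => True, fun _ _ => False, fun _ => True⟩, ?_⟩
  ext t
  simp only [BTA.Lang, Set.mem_ofPred_eq, true_and]
  constructor
  · rintro ⟨_, h⟩
    induction h with
    | app _ _ ih => exact ih
    | eps _ he => exact he.elim
  · intro ht
    refine ⟨(), ?_⟩
    induction t with
    | var n => exact ht.elim
    | app f ts ih => exact .app (qs := fun _ => ()) (fun i => ih i (ht i)) trivial

theorem BTA.Reach.app_mono {Q : Type} {A : BTA σ ar Q} {s : σ} {ts ts' : Fin (ar s) → Tm σ ar}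
    (hts : ∀ i q, A.Reach (ts i) q → A.Reach (ts' i) q) {q : Q} (h : A.Reach (.app s ts) q) :
    A.Reach (.app s ts') q := by
  generalize hu : Tm.app s ts = u at h
  induction h with
  | app hreach htrans =>
    injection hu with hs hts'
    subst hs hts'
    exact .app (fun i => hts i _ (hreach i)) htrans
  | eps _ heps ih => exact .eps (ih hu) heps

end Automata

section Sigma

theorem f19_eq_app (t : Tm Sg19 ar19) : f19 t = .app .f fun _ => t := by
  unfold f19; congr; funext i; fin_cases i; rfl

theorem g19_eq_app (t : Tm Sg19 ar19) : g19 t = .app .g fun _ => t := by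
  unfold g19; congr; funext i; fin_cases i; rfl

theorem Steps.congr_f19 {R : Set (Tm Sg19 ar19 × Tm Sg19 ar19)} {t t' : Tm Sg19 ar19}
    (h : Steps R t t') : Steps R (f19 t) (f19 t') := by
  rw [f19_eq_app, f19_eq_app]
  exact h.lift _ fun _ _ => Step.unary (s := Sg19.f) rfl

theorem Steps.congr_g19 {R : Set (Tm Sg19 ar19 × Tm Sg19 ar19)} {t t' : Tm Sg19 ar19}
    (h : Steps R t t') : Steps R (g19 t) (g19 t') := by
  rw [g19_eq_app, g19_eq_app]
  exact h.lift _ fun _ _ => Step.unary (s := Sg19.g) rfl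

@[elab_as_elim]
theorem Tm.Ground.induction19 {P : Tm Sg19 ar19 → Prop} {t : Tm Sg19 ar19} (ht : t.Ground)
    (sharp : P sharp19) (f : ∀ t, t.Ground → P t → P (f19 t))
    (g : ∀ t, t.Ground → P t → P (g19 t)) : P t := by
  induction t with
  | var n => exact ht.elim
  | app s ts ih =>
    cases s with
    | sharp => convert sharp; unfold sharp19; congr; funext i; exact i.elim0
    | f =>
      convert f (ts ⟨0, Nat.one_pos⟩) (ht _) (ih _ (ht _))
      rw [f19_eq_app]; congr; funext i; exact congrArg ts (Subsingleton.elim (α := Fin 1) _ _)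
    | g =>
      convert g (ts ⟨0, Nat.one_pos⟩) (ht _) (ih _ (ht _))
      rw [g19_eq_app]; congr; funext i; exact congrArg ts (Subsingleton.elim (α := Fin 1) _ _)

theorem Tm.Ground.cases19 {t : Tm Sg19 ar19} (ht : t.Ground) :
    t = sharp19 ∨ ∃ s, s.Ground ∧ (t = f19 s ∨ t = g19 s) :=
  ht.induction19 (.inl rfl) (fun s hs _ => .inr ⟨s, hs, .inl rfl⟩)
    (fun s hs _ => .inr ⟨s, hs, .inr rfl⟩)

theorem vars_f19 (t : Tm Sg19 ar19) : (f19 t).vars = t.vars := by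
  rw [f19_eq_app]; exact Set.iUnion_const (ι := Fin 1) _

theorem vars_g19 (t : Tm Sg19 ar19) : (g19 t).vars = t.vars := by
  rw [g19_eq_app]; exact Set.iUnion_const (ι := Fin 1) _

theorem vars_sharp19 : sharp19.vars = ∅ := Set.iUnion_of_empty (ι := Fin 0) _

theorem R19_vars_subset : ∀ lr ∈ R19, lr.2.vars ⊆ lr.1.vars := by
  simp [R19, vars_f19, vars_g19, vars_sharp19]

@[simp]
theorem ground_f19_iff {t : Tm Sg19 ar19} : (f19 t).Ground ↔ t.Ground := by
  rw [f19_eq_app]; exact ⟨fun h => h ⟨0, Nat.one_pos⟩, fun h _ => h⟩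

@[simp]
theorem ground_g19_iff {t : Tm Sg19 ar19} : (g19 t).Ground ↔ t.Ground := by
  rw [g19_eq_app]; exact ⟨fun h => h ⟨0, Nat.one_pos⟩, fun h _ => h⟩

@[simp]
theorem ground_sharp19 : sharp19.Ground := fun i => i.elim0

theorem steps_R19_sharp19 {t : Tm Sg19 ar19} (ht : t.Ground) :
    Steps R19 t sharp19 ∧ Steps R19 sharp19 t := by
  refine ht.induction19 ⟨.refl, .refl⟩ (fun s _ ih => ⟨?_, ?_⟩) (fun s _ ih => ⟨?_, ?_⟩)
  · exact ih.1.congr_f19.tail (Step.of_mem (by simp [R19]))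
  · exact ih.2.congr_f19.head (Step.of_mem (by simp [R19]))
  · exact ih.1.congr_g19.tail (Step.of_mem (by simp [R19]))
  · exact ih.2.congr_g19.head (Step.of_mem (by simp [R19]))

theorem desc_R19_of_nonempty {L : Set (Tm Sg19 ar19)} (hL : ∀ t ∈ L, t.Ground) (hne : L.Nonempty) :
    Desc R19 L = {t | t.Ground} := by
  obtain ⟨q, hq⟩ := hne
  ext t
  constructor
  · rintro ⟨q', hq', h⟩
    exact h.preserves (fun _ _ => Step.ground R19_vars_subset) (hL q' hq')
  · exact fun ht => ⟨q, hq, (steps_R19_sharp19 (hL q hq)).1.trans (steps_R19_sharp19 ht).2⟩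

end Sigma

section Delta

local notation "TmΔ" => Tm (Sg19 ⊕ Unit) arD19

local notation "♯Δ" => embD19 sharp19

theorem fD19_eq_app (t : TmΔ) : fD19 t = .app (Sum.inl Sg19.f) fun _ => t := by
  unfold fD19; congr; funext i; fin_cases i; rfl

theorem gD19_eq_app (t : TmΔ) : gD19 t = .app (Sum.inl Sg19.g) fun _ => t := by
  unfold gD19; congr; funext i; fin_cases i; rfl

theorem hD19_eq_app (t : TmΔ) : hD19 t = .app (Sum.inr ()) fun _ => t := by
  unfold hD19; congr; funext i; fin_cases i; rfl

@[simp]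
theorem fD19_inj {a b : TmΔ} : fD19 a = fD19 b ↔ a = b := by
  rw [fD19_eq_app, fD19_eq_app]
  exact ⟨fun h => by injection h with _ h; exact congrFun h ⟨0, Nat.one_pos⟩,
    fun h => h ▸ rfl⟩

@[simp]
theorem gD19_inj {a b : TmΔ} : gD19 a = gD19 b ↔ a = b := by
  rw [gD19_eq_app, gD19_eq_app]
  exact ⟨fun h => by injection h with _ h; exact congrFun h ⟨0, Nat.one_pos⟩,
    fun h => h ▸ rfl⟩

@[simp]
theorem hD19_inj {a b : TmΔ} : hD19 a = hD19 b ↔ a = b := by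
  rw [hD19_eq_app, hD19_eq_app]
  exact ⟨fun h => by injection h with _ h; exact congrFun h ⟨0, Nat.one_pos⟩,
    fun h => h ▸ rfl⟩

@[simp] theorem fD19_ne_gD19 (a b : TmΔ) : fD19 a ≠ gD19 b := nofun
@[simp] theorem gD19_ne_fD19 (a b : TmΔ) : gD19 a ≠ fD19 b := nofun
@[simp] theorem fD19_ne_hD19 (a b : TmΔ) : fD19 a ≠ hD19 b := nofun
@[simp] theorem hD19_ne_fD19 (a b : TmΔ) : hD19 a ≠ fD19 b := nofun
@[simp] theorem gD19_ne_hD19 (a b : TmΔ) : gD19 a ≠ hD19 b := nofun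
@[simp] theorem hD19_ne_gD19 (a b : TmΔ) : hD19 a ≠ gD19 b := nofun
@[simp] theorem fD19_ne_sharpΔ (a : TmΔ) : fD19 a ≠ ♯Δ := nofun
@[simp] theorem sharpΔ_ne_fD19 (a : TmΔ) : ♯Δ ≠ fD19 a := nofun
@[simp] theorem gD19_ne_sharpΔ (a : TmΔ) : gD19 a ≠ ♯Δ := nofun
@[simp] theorem sharpΔ_ne_gD19 (a : TmΔ) : ♯Δ ≠ gD19 a := nofun
@[simp] theorem hD19_ne_sharpΔ (a : TmΔ) : hD19 a ≠ ♯Δ := nofun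
@[simp] theorem sharpΔ_ne_hD19 (a : TmΔ) : ♯Δ ≠ hD19 a := nofun

@[simp] theorem embD19_var (n : ℕ) : embD19 (.var n) = .var n := rfl

@[simp]
theorem embD19_f19 (t : Tm Sg19 ar19) : embD19 (f19 t) = fD19 (embD19 t) := by
  simp only [fD19, embD19, f19, Tm.map]; congr; funext i; fin_cases i; rfl

@[simp]
theorem embD19_g19 (t : Tm Sg19 ar19) : embD19 (g19 t) = gD19 (embD19 t) := by
  simp only [gD19, embD19, g19, Tm.map]; congr; funext i; fin_cases i; rfl

@[simp]
theorem subst_fD19 (θ : ℕ → TmΔ) (t : TmΔ) : (fD19 t).subst θ = fD19 (t.subst θ) := by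
  simp only [fD19_eq_app, Tm.subst]

@[simp]
theorem subst_gD19 (θ : ℕ → TmΔ) (t : TmΔ) : (gD19 t).subst θ = gD19 (t.subst θ) := by
  simp only [gD19_eq_app, Tm.subst]

@[simp]
theorem subst_sharpΔ (θ : ℕ → TmΔ) : (♯Δ).subst θ = ♯Δ := by
  simp only [embD19, sharp19, Tm.map, Tm.subst]; congr; funext i; exact i.elim0

theorem mem_R19D {l' r' : TmΔ} (h : (l', r') ∈ R19D) :
    ∃ l r, (l, r) ∈ R19 ∧ l' = embD19 l ∧ r' = embD19 r := by
  obtain ⟨⟨l, r⟩, hlr, he⟩ := h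
  obtain ⟨rfl, rfl⟩ := Prod.mk.inj he
  exact ⟨l, r, hlr, rfl, rfl⟩

theorem RootStep.R19D_cases {u v : TmΔ} (h : RootStep R19D u v) :
    (∃ x, u = fD19 (gD19 x) ∧ v = fD19 (fD19 (gD19 (gD19 x)))) ∨ (u = fD19 ♯Δ ∧ v = ♯Δ) ∨
      (u = gD19 ♯Δ ∧ v = ♯Δ) ∨ (u = ♯Δ ∧ v = fD19 ♯Δ) ∨ (u = ♯Δ ∧ v = gD19 ♯Δ) := by
  obtain ⟨_, _, θ, hmem, rfl, rfl⟩ := h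
  obtain ⟨l, r, hlr, rfl, rfl⟩ := mem_R19D hmem
  rcases hlr with ⟨rfl, rfl⟩ | ⟨rfl, rfl⟩ | ⟨rfl, rfl⟩ | ⟨rfl, rfl⟩ | ⟨rfl, rfl⟩ <;> simp

theorem Step.congr_fD19 {R : Set (TmΔ × TmΔ)} {t t' : TmΔ} (h : Step R t t') :
    Step R (fD19 t) (fD19 t') := by
  rw [fD19_eq_app, fD19_eq_app]; exact Step.unary (s := Sum.inl Sg19.f) rfl h

theorem Step.congr_gD19 {R : Set (TmΔ × TmΔ)} {t t' : TmΔ} (h : Step R t t') :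
    Step R (gD19 t) (gD19 t') := by
  rw [gD19_eq_app, gD19_eq_app]; exact Step.unary (s := Sum.inl Sg19.g) rfl h

theorem Step.congr_hD19 {R : Set (TmΔ × TmΔ)} {t t' : TmΔ} (h : Step R t t') :
    Step R (hD19 t) (hD19 t') := by
  rw [hD19_eq_app, hD19_eq_app]; exact Step.unary (s := Sum.inr ()) rfl h

theorem Step.fD19_cases {x v : TmΔ} (h : Step R19D (fD19 x) v) :
    (x = ♯Δ ∧ v = ♯Δ) ∨ (∃ y, x = gD19 y ∧ v = fD19 (fD19 (gD19 (gD19 y)))) ∨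
      ∃ x', Step R19D x x' ∧ v = fD19 x' := by
  rw [fD19_eq_app] at h
  rcases Step.unary_cases (s := Sum.inl Sg19.f) rfl h with hroot | ⟨x', hstep, rfl⟩
  · rw [← fD19_eq_app] at hroot
    rcases hroot.R19D_cases with ⟨y, hu, rfl⟩ | ⟨hu, rfl⟩ | ⟨hu, rfl⟩ | ⟨hu, rfl⟩ | ⟨hu, rfl⟩ <;>
      clear h <;> simp_all
  · exact .inr (.inr ⟨x', hstep, (fD19_eq_app x').symm⟩)

theorem Step.gD19_cases {x v : TmΔ} (h : Step R19D (gD19 x) v) :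
    (x = ♯Δ ∧ v = ♯Δ) ∨ ∃ x', Step R19D x x' ∧ v = gD19 x' := by
  rw [gD19_eq_app] at h
  rcases Step.unary_cases (s := Sum.inl Sg19.g) rfl h with hroot | ⟨x', hstep, rfl⟩
  · rw [← gD19_eq_app] at hroot
    rcases hroot.R19D_cases with ⟨y, hu, rfl⟩ | ⟨hu, rfl⟩ | ⟨hu, rfl⟩ | ⟨hu, rfl⟩ | ⟨hu, rfl⟩ <;>
      clear h <;> simp_all
  · exact .inr ⟨x', hstep, (gD19_eq_app x').symm⟩

theorem Step.hD19_cases {x v : TmΔ} (h : Step R19D (hD19 x) v) :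
    ∃ x', Step R19D x x' ∧ v = hD19 x' := by
  rw [hD19_eq_app] at h
  rcases Step.unary_cases (s := Sum.inr ()) rfl h with hroot | ⟨x', hstep, rfl⟩
  · rw [← hD19_eq_app] at hroot
    rcases hroot.R19D_cases with ⟨y, hu, rfl⟩ | ⟨hu, rfl⟩ | ⟨hu, rfl⟩ | ⟨hu, rfl⟩ | ⟨hu, rfl⟩ <;>
      clear h <;> simp_all
  · exact ⟨x', hstep, (hD19_eq_app x').symm⟩

theorem Step.sharpΔ_cases {v : TmΔ} (h : Step R19D ♯Δ v) : v = fD19 ♯Δ ∨ v = gD19 ♯Δ := by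
  rcases Step.app_cases (s := Sum.inl Sg19.sharp) h with hroot | ⟨i, -, -, -⟩
  · have hroot : RootStep R19D ♯Δ v := hroot
    rcases hroot.R19D_cases with
      ⟨y, hu, rfl⟩ | ⟨hu, rfl⟩ | ⟨hu, rfl⟩ | ⟨hu, rfl⟩ | ⟨hu, rfl⟩ <;> clear h <;> simp_all
  · exact i.elim0

theorem Step.exists_ground_embD19 {t : Tm Sg19 ar19} (ht : t.Ground) {v : TmΔ}
    (h : Step R19D (embD19 t) v) :
    ∃ t', t'.Ground ∧ v = embD19 t' := by
  suffices ∀ v, Step R19D (embD19 t) v → ∃ t', t'.Ground ∧ v = embD19 t' from this v h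
  refine ht.induction19 (fun v h => ?_) (fun t ht ih v h => ?_) (fun t ht ih v h => ?_)
  · rcases h.sharpΔ_cases with rfl | rfl
    · exact ⟨f19 sharp19, by simp, by simp⟩
    · exact ⟨g19 sharp19, by simp, by simp⟩
  · rw [embD19_f19] at h
    rcases h.fD19_cases with ⟨-, rfl⟩ | ⟨y, hy, rfl⟩ | ⟨x', hx', rfl⟩
    · exact ⟨sharp19, by simp, rfl⟩
    · rcases ht.cases19 with rfl | ⟨s, hs, rfl | rfl⟩ <;> simp at hy
      exact ⟨f19 (f19 (g19 (g19 s))), by simpa, by simp [hy]⟩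
    · obtain ⟨t', ht', rfl⟩ := ih _ hx'
      exact ⟨f19 t', by simpa, by simp⟩
  · rw [embD19_g19] at h
    rcases h.gD19_cases with ⟨-, rfl⟩ | ⟨x', hx', rfl⟩
    · exact ⟨sharp19, by simp, rfl⟩
    · obtain ⟨t', ht', rfl⟩ := ih _ hx'
      exact ⟨g19 t', by simpa, by simp⟩

theorem Step.iterate_gD19_hD19 {n : ℕ} {t : Tm Sg19 ar19} (ht : t.Ground) {v : TmΔ}
    (h : Step R19D (gD19^[n] (hD19 (embD19 t))) v) :
    ∃ t', t'.Ground ∧ v = gD19^[n] (hD19 (embD19 t')) := by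
  induction n generalizing v with
  | zero =>
    obtain ⟨x', hx', rfl⟩ := h.hD19_cases
    obtain ⟨t', ht', rfl⟩ := hx'.exists_ground_embD19 ht
    exact ⟨t', ht', rfl⟩
  | succ n ih =>
    rw [Function.iterate_succ_apply'] at h
    rcases h.gD19_cases with ⟨hx, -⟩ | ⟨x', hx', rfl⟩
    · cases n <;> simp [Function.iterate_succ_apply'] at hx
    · obtain ⟨t', ht', rfl⟩ := ih hx'
      exact ⟨t', ht', (Function.iterate_succ_apply' ..).symm⟩

theorem Step.iterate_fD19_gD19_hD19 {k n : ℕ} {t : Tm Sg19 ar19} (ht : t.Ground) {v : TmΔ}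
    (h : Step R19D (fD19^[k] (gD19^[n] (hD19 (embD19 t)))) v) :
    (∃ t', t'.Ground ∧ v = fD19^[k] (gD19^[n] (hD19 (embD19 t')))) ∨
      v = fD19^[k + 1] (gD19^[n + 1] (hD19 (embD19 t))) := by
  induction k generalizing v with
  | zero => exact .inl (h.iterate_gD19_hD19 ht)
  | succ k ih =>
    rw [Function.iterate_succ_apply'] at h
    rcases h.fD19_cases with ⟨hx, -⟩ | ⟨y, hy, rfl⟩ | ⟨x', hx', rfl⟩
    · cases k <;> cases n <;> simp [Function.iterate_succ_apply'] at hx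
    · right
      cases k <;> cases n <;> simp [Function.iterate_succ_apply'] at hy ⊢
      rw [hy]
    · rcases ih hx' with ⟨t', ht', rfl⟩ | rfl
      · exact .inl ⟨t', ht', (Function.iterate_succ_apply' ..).symm⟩
      · exact .inr (Function.iterate_succ_apply' ..).symm

theorem Step.R19D_pump (x : TmΔ) :
    Step R19D (fD19 (gD19 x)) (fD19 (fD19 (gD19 (gD19 x)))) := by
  have hmem : (embD19 (f19 (g19 (.var 0))), embD19 (f19 (f19 (g19 (g19 (.var 0)))))) ∈ R19D :=
    ⟨(f19 (g19 (.var 0)), f19 (f19 (g19 (g19 (.var 0))))), Set.mem_insert _ _, rfl⟩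
  simpa [Tm.subst] using Step.rule (fun _ => x) hmem

theorem Steps.R19D_pump {n : ℕ} (hn : 1 ≤ n) (x : TmΔ) :
    Steps R19D (fD19 (gD19 x)) (fD19^[n] (gD19^[n] x)) := by
  induction n, hn using Nat.le_induction with
  | base => exact .refl
  | succ n hn ih =>
    refine ih.tail ?_
    obtain ⟨m, rfl⟩ := Nat.exists_eq_add_of_le' hn
    simpa only [Function.iterate_succ_apply fD19, Function.iterate_succ_apply' gD19] using
      rel_iterate (fun _ _ => Step.congr_fD19) m (Step.R19D_pump (gD19^[m] x))

theorem desc_R19D_singleton :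
    Desc R19D {fD19 (gD19 (hD19 ♯Δ))} = {u | ∃ n, 1 ≤ n ∧ ∃ t : Tm Sg19 ar19, t.Ground ∧
      u = fD19^[n] (gD19^[n] (hD19 (embD19 t)))} := by
  ext u
  constructor
  · rintro ⟨_, rfl, h⟩
    refine h.preserves ?_ ⟨1, le_rfl, sharp19, ground_sharp19, rfl⟩
    rintro _ v hstep ⟨n, hn, t, ht, rfl⟩
    rcases hstep.iterate_fD19_gD19_hD19 ht with ⟨t', ht', rfl⟩ | rfl
    · exact ⟨n, hn, t', ht', rfl⟩
    · exact ⟨n + 1, by omega, t, ht, rfl⟩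
  · rintro ⟨n, hn, t, ht, rfl⟩
    have hlift : Steps R19D ♯Δ (embD19 t) :=
      (steps_R19_sharp19 ht).2.lift _ fun _ _ => Step.map _ _
    refine ⟨_, rfl, (Steps.R19D_pump hn _).trans ?_⟩
    refine rel_iterate (fun _ _ h => h.lift fD19 fun _ _ => Step.congr_fD19) n ?_
    refine rel_iterate (fun _ _ h => h.lift gD19 fun _ _ => Step.congr_gD19) n ?_
    exact hlift.lift hD19 fun _ _ => Step.congr_hD19

theorem iterate_gD19_hD19_inj {n n' : ℕ} {x x' : TmΔ}
    (h : gD19^[n] (hD19 x) = gD19^[n'] (hD19 x')) : n = n' := by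
  induction n generalizing n' with
  | zero => cases n' <;> simp_all [Function.iterate_succ_apply']
  | succ n ih =>
    cases n'
    · simp [Function.iterate_succ_apply'] at h
    · simp only [Function.iterate_succ_apply', gD19_inj] at h
      exact congrArg _ (ih h)

theorem iterate_fD19_gD19_hD19_inj {k k' n n' : ℕ} {x x' : TmΔ}
    (h : fD19^[k] (gD19^[n] (hD19 x)) = fD19^[k'] (gD19^[n'] (hD19 x'))) : k = k' ∧ n = n' := by
  induction k generalizing k' with
  | zero =>
    cases k'
    · exact ⟨rfl, iterate_gD19_hD19_inj h⟩
    · cases n <;> simp [Function.iterate_succ_apply'] at h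
  | succ k ih =>
    cases k'
    · cases n' <;> simp [Function.iterate_succ_apply'] at h
    · simp only [Function.iterate_succ_apply', fD19_inj] at h
      simpa using ih h

theorem not_recognizable_iterate_fD19_gD19 :
    ¬ Recognizable {u : TmΔ | ∃ n, 1 ≤ n ∧ ∃ t : Tm Sg19 ar19, t.Ground ∧
      u = fD19^[n] (gD19^[n] (hD19 (embD19 t)))} := by
  rintro ⟨Q, hQ, A, hA⟩
  obtain ⟨n, m, hnm, hsame⟩ := Finite.exists_ne_map_eq_of_infinite
    fun n : ℕ => {q | A.Reach (gD19^[n + 1] (hD19 ♯Δ)) q}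
  have hmono : ∀ k q, A.Reach (fD19^[k] (gD19^[m + 1] (hD19 ♯Δ))) q →
      A.Reach (fD19^[k] (gD19^[n + 1] (hD19 ♯Δ))) q := by
    intro k
    refine rel_iterate (r := fun t t' => ∀ q, A.Reach t q → A.Reach t' q) ?_ k
      (fun q h => (Set.ext_iff.1 hsame q).2 h)
    intro t t' h q hq
    rw [fD19_eq_app] at hq ⊢
    exact hq.app_mono fun _ => h
  obtain ⟨q, hq, hreach⟩ : fD19^[m + 1] (gD19^[m + 1] (hD19 ♯Δ)) ∈ A.Lang :=
    hA ▸ ⟨m + 1, by omega, sharp19, ground_sharp19, rfl⟩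
  have hmem : fD19^[m + 1] (gD19^[n + 1] (hD19 ♯Δ)) ∈ A.Lang := ⟨q, hq, hmono _ q hreach⟩
  rw [hA] at hmem
  obtain ⟨k, -, t, -, he⟩ := hmem
  have := iterate_fD19_gD19_hD19_inj he
  omega

end Delta

theorem stmt_19 :
    -- (a) every ground term reaches `♯` and is reachable from `♯`, …
    (∀ t : Tm Sg19 ar19, t.Ground → Steps R19 t sharp19 ∧ Steps R19 sharp19 t) ∧
    -- … so the descendants of any nonempty `L ⊆ T_Σ` are all of `T_Σ`, …
    (∀ L : Set (Tm Sg19 ar19), (∀ t ∈ L, t.Ground) → L.Nonempty →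
      Desc R19 L = {t : Tm Sg19 ar19 | t.Ground}) ∧
    -- … in particular `R` preserves `Σ`-recognizability of finite tree languages;
    (∀ L : Set (Tm Sg19 ar19), L.Finite → (∀ t ∈ L, t.Ground) →
      Recognizable (Desc R19 L)) ∧
    -- (b) over `Δ`, `R*_Δ({f(g(h(♯)))}) = {fⁿ(gⁿ(h(t))) : n ≥ 1, t ∈ T_Σ}` …
    Desc R19D {fD19 (gD19 (hD19 (embD19 sharp19)))} =
      {u : Tm (Sg19 ⊕ Unit) arD19 | ∃ n : ℕ, 1 ≤ n ∧ ∃ t : Tm Sg19 ar19,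
        t.Ground ∧ u = fD19^[n] (gD19^[n] (hD19 (embD19 t)))} ∧
    -- … which is not recognizable, …
    ¬ Recognizable (Desc R19D {fD19 (gD19 (hD19 (embD19 sharp19)))}) ∧
    -- … hence `R` does not preserve recognizability of finite tree languages.
    ¬ PRF R19 := by
  have hstart : ∀ t ∈ ({fD19 (gD19 (hD19 (embD19 sharp19)))} : Set (Tm (Sg19 ⊕ Unit) arD19)),
      t.Ground := by
    rintro _ rfl
    rw [fD19_eq_app, gD19_eq_app, hD19_eq_app]
    exact fun _ _ _ i => i.elim0
  refine ⟨fun _ => steps_R19_sharp19, fun _ => desc_R19_of_nonempty, ?_, desc_R19D_singleton,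
    desc_R19D_singleton ▸ not_recognizable_iterate_fD19_gD19, fun hPRF => ?_⟩
  · intro L _ hL
    rcases L.eq_empty_or_nonempty with rfl | hne
    · simpa [Desc] using recognizable_empty
    · exact desc_R19_of_nonempty hL hne ▸ recognizable_setOf_ground
  · exact not_recognizable_iterate_fD19_gD19 (desc_R19D_singleton ▸
      hPRF _ _ inferInstance Sum.inl Sum.inl_injective _ _ (Set.finite_singleton _) hstart)
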